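/- arXiv:2104.01877 — 2 statements merged into one kernel-verified Lean document; each statement's English description precedes it below -/
import Mathlib

section
/- Let m, n be positive integers and let u = (u_1, …, u_n) be a weakly increasing sequence of nonnegative integers with u_k ≤ m(k−1) for all k (the step sequence of a (1,m)-Dyck path of size n). Then the multi-permutation ζ(u) avoids the pattern 312, i.e., there are no positions i < j < k with ζ(u)_j < ζ(u)_k < ζ(u)_i. -/
/-- `zeta m u N` : starting from the empty sequence, for `i = 1, …, N` in order,
insert a contiguous block of `m` copies of `i` so that exactly `u i` of the
already-present entries lie to its left. -/
def zeta (m : ℕ) (u : ℕ → ℕ) : ℕ → List ℕ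
  | 0 => []
  | n + 1 =>
      (zeta m u n).take (u (n + 1)) ++ List.replicate m (n + 1) ++
        (zeta m u n).drop (u (n + 1))

/-! The value `n + 1` exceeds every entry of `ζ(u)` after `n` steps, so in a 312-pattern of the
next sequence it can only play the role of the `3`. A 312-pattern therefore either misses the new
block, and then already occurs in the old sequence, or starts in the block and continues to its
right, i.e. after position `u (n + 1)` of the old sequence. Because `u` is weakly increasing, each
block is inserted at or after the previous one, so the part of the sequence from position `u n`
on stays weakly decreasing, and the `1` and `2` of the pattern cannot occur there in increasing
order. -/

namespace List

variable {α : Type*}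

def Avoids312 [LT α] (l : List α) : Prop :=
  ∀ a b c, [a, b, c] <+ l → ¬(b < c ∧ c < a)

theorem cons_sublist_of_cons_sublist_append_of_not_mem {a : α} {l l₁ l₂ : List α}
    (ha : a ∉ l₁) (h : a :: l <+ l₁ ++ l₂) : a :: l <+ l₂ := by
  induction l₁ with
  | nil => exact h
  | cons b l₁ ih =>
    rw [cons_append, sublist_cons_iff] at h
    rcases h with h | ⟨r, hab, -⟩
    · exact ih (fun hmem => ha (mem_cons_of_mem b hmem)) h
    · exact absurd (mem_cons.mpr (Or.inl (cons_eq_cons.mp hab).1)) ha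

theorem get_triple_sublist {l : List α} {i j k : Fin l.length} (hij : i < j) (hjk : j < k) :
    [l.get i, l.get j, l.get k] <+ l := by
  have hlt : [i, j, k].Pairwise (· < ·) := by simp [hij, hjk, hij.trans hjk]
  have hsub : [i, j, k] <+ finRange l.length :=
    sublist_of_subperm_of_pairwise (subperm_of_subset hlt.nodup (fun x _ => mem_finRange x))
      hlt (pairwise_lt_finRange _)
  simpa [map_get_finRange] using hsub.map l.get

variable [LinearOrder α] {l : List α} {a : α}

theorem pairwise_ge_drop_insert_replicate (m : ℕ) {p : ℕ} (hl : ∀ x ∈ l, x < a)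
    (hdrop : (l.drop p).Pairwise (· ≥ ·)) :
    ((l.take p ++ replicate m a ++ l.drop p).drop p).Pairwise (· ≥ ·) := by
  have hblock : (replicate m a ++ l.drop p).Pairwise (· ≥ ·) := by
    refine pairwise_append.mpr ⟨pairwise_replicate.mpr (Or.inr le_rfl), hdrop, ?_⟩
    intro x hx y hy
    rw [eq_of_mem_replicate hx]
    exact (hl y (mem_of_mem_drop hy)).le
  have hsuffix : (l.take p ++ replicate m a ++ l.drop p).drop p <+ replicate m a ++ l.drop p := by
    rw [append_assoc, drop_append, drop_take_self, nil_append]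
    exact drop_sublist _ _
  exact hblock.sublist hsuffix

theorem Avoids312.insert_replicate (m : ℕ) {p : ℕ} (hl : ∀ x ∈ l, x < a)
    (havoid : l.Avoids312) (hdrop : (l.drop p).Pairwise (· ≥ ·)) :
    (l.take p ++ replicate m a ++ l.drop p).Avoids312 := by
  intro x y z hsub ⟨hyz, hzx⟩
  have hle : ∀ w ∈ l.take p ++ replicate m a ++ l.drop p, w ≤ a := by
    simp only [mem_append]
    rintro w ((hw | hw) | hw)
    · exact (hl w (mem_of_mem_take hw)).le
    · exact (eq_of_mem_replicate hw).le
    · exact (hl w (mem_of_mem_drop hw)).le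
  have hza : z < a := hzx.trans_le (hle x (mem_of_cons_sublist hsub))
  by_cases hxa : x = a
  · subst hxa
    rw [append_assoc] at hsub
    have hx : [x, y, z] <+ replicate m x ++ l.drop p :=
      cons_sublist_of_cons_sublist_append_of_not_mem
        (fun hmem => lt_irrefl x (hl x (mem_of_mem_take hmem))) hsub
    have hy : [y, z] <+ l.drop p :=
      cons_sublist_of_cons_sublist_append_of_not_mem
        (fun hmem => (hyz.trans hza).ne (eq_of_mem_replicate hmem)) (sublist_of_cons_sublist hx)
    exact absurd (pairwise_pair.mp (hdrop.sublist hy)) (not_le.mpr hyz)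
  · have hfilter := hsub.filter (· ≠ a)
    rw [filter_eq_self.mpr (by simp [hxa, hza.ne, (hyz.trans hza).ne]), filter_append,
      filter_append, filter_replicate_of_neg (by simp), append_nil, ← filter_append,
      take_append_drop, filter_eq_self.mpr (fun w hw => by simpa using (hl w hw).ne)] at hfilter
    exact havoid x y z hfilter ⟨hyz, hzx⟩

end List

open List

theorem lt_of_mem_zeta (m : ℕ) (u : ℕ → ℕ) {n x : ℕ} (hx : x ∈ zeta m u n) :
    x < n + 1 := by
  induction n with
  | zero => simp [zeta] at hx
  | succ n ih =>
    simp only [zeta, mem_append] at hx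
    rcases hx with (hx | hx) | hx
    · exact (ih (mem_of_mem_take hx)).trans (Nat.lt_succ_self _)
    · rw [eq_of_mem_replicate hx]; exact Nat.lt_succ_self _
    · exact (ih (mem_of_mem_drop hx)).trans (Nat.lt_succ_self _)

theorem pairwise_ge_drop_succ_zeta (m : ℕ) (u : ℕ → ℕ) {n : ℕ}
    (hmono : ∀ k, 1 ≤ k → k < n + 1 → u k ≤ u (k + 1)) :
    ((zeta m u n).drop (u (n + 1))).Pairwise (· ≥ ·) := by
  induction n with
  | zero => simp [zeta]
  | succ n ih =>
    have hdrop := pairwise_ge_drop_insert_replicate m (fun x => lt_of_mem_zeta m u)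
      (ih fun k hk hkn => hmono k hk (hkn.trans (Nat.lt_succ_self _)))
    exact hdrop.sublist
      (drop_sublist_drop_left _ (hmono (n + 1) (Nat.le_add_left 1 n) (Nat.lt_succ_self _)))

theorem avoids312_zeta (m : ℕ) (u : ℕ → ℕ) {n : ℕ}
    (hmono : ∀ k, 1 ≤ k → k < n → u k ≤ u (k + 1)) : (zeta m u n).Avoids312 := by
  induction n with
  | zero => simp [zeta, Avoids312]
  | succ n ih =>
    exact (ih fun k hk hkn => hmono k hk (hkn.trans (Nat.lt_succ_self n))).insert_replicate m
      (fun x => lt_of_mem_zeta m u) (pairwise_ge_drop_succ_zeta m u hmono)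

theorem zeta_avoids_312_general (m n : ℕ) (u : ℕ → ℕ)
    (hmono : ∀ k, 1 ≤ k → k < n → u k ≤ u (k + 1)) :
    ∀ i j k : Fin (zeta m u n).length, i < j → j < k →
      ¬((zeta m u n).get j < (zeta m u n).get k ∧
        (zeta m u n).get k < (zeta m u n).get i) := fun _ _ _ hij hjk =>
  avoids312_zeta m u hmono _ _ _ (get_triple_sublist hij hjk)

/-- if `u` is the step sequence of a (1,m)-Dyck path of size `n`
(weakly increasing, `u k ≤ m*(k-1)`), then the multi-permutation `ζ(u)` avoids
the pattern 312: there are no positions `i < j < k` with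
`ζ(u)_j < ζ(u)_k < ζ(u)_i`. -/
theorem zeta_avoids_312 (m n : ℕ) (hm : 0 < m) (hn : 0 < n) (u : ℕ → ℕ)
    (hmono : ∀ k, 1 ≤ k → k < n → u k ≤ u (k + 1))
    (hbound : ∀ k, 1 ≤ k → k ≤ n → u k ≤ m * (k - 1)) :
    ∀ i j k : Fin (zeta m u n).length, i < j → j < k →
      ¬((zeta m u n).get j < (zeta m u n).get k ∧
        (zeta m u n).get k < (zeta m u n).get i) :=
  zeta_avoids_312_general m n u hmono
end

section
/- Let m, n be positive integers and let π be an m-Stirling permutation of size n. Then for every 1 ≤ i ≤ m the word α^I_i(π) is a Dyck word of size n, and for every 1 ≤ i ≤ m−1 the step sequence of α^I_i(π) is componentwise ≤ the step sequence of α^I_{i+1}(π); that is, α^I_{i+1}(π) ≤ α^I_i(π) in the Young order, so α^I_m(π) ≤_Y α^I_{m−1}(π) ≤_Y … ≤_Y α^I_1(π). -/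
/-- `π` is an `m`-Stirling permutation of size `n`. -/
def IsStirling (m n : ℕ) (π : List ℕ) : Prop :=
  π.length = m * n ∧
  (∀ v, 1 ≤ v → v ≤ n → π.count v = m) ∧
  (∀ v, v ∈ π → 1 ≤ v ∧ v ≤ n) ∧
  ∀ p q r : Fin π.length, p < q → q < r → π.get p = π.get r → π.get p ≤ π.get q

/-- The parenthesis presentation of type I: `alphaI m i π` is the word
(`true` = '(', `false` = ')') obtained by scanning `π` from left to right,
outputting '(' at each first occurrence of a value and ')' at each
`(m+1-i)`-th occurrence of a value, with '(' preceding ')' when both occur at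
the same entry. -/
def alphaI (m i : ℕ) (π : List ℕ) : List Bool :=
  (List.range π.length).flatMap (fun p =>
    (if (π.take (p + 1)).count (π.getD p 0) = 1 then [true] else []) ++
    (if (π.take (p + 1)).count (π.getD p 0) = m + 1 - i then [false] else []))

/-- `w` is a Dyck word of size `n`: `n` '('s (`true`), `n` ')'s (`false`), and
every prefix has at least as many '(' as ')'. -/
def IsDyckWord (n : ℕ) (w : List Bool) : Prop :=
  w.count true = n ∧ w.count false = n ∧
  ∀ p, (w.take p).count false ≤ (w.take p).count true

/-- the (0-based) index of the `k`-th (1-based) `true` in `w`. -/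
def kthTrueIdx (w : List Bool) (k : ℕ) : ℕ :=
  ((List.range w.length).filter (fun p => w.getD p false = true)).getD (k - 1) 0

/-- `stepVal w k` : number of ')' (`false`) preceding the `k`-th '(' (`true`),
i.e. the `k`-th entry of the step sequence of `w`. -/
def stepVal (w : List Bool) (k : ℕ) : ℕ :=
  (w.take (kthTrueIdx w k)).count false

namespace SPaux

def cnt (π : List ℕ) (p : ℕ) : ℕ := (π.take (p + 1)).count (π.getD p 0)

def blk (m i : ℕ) (π : List ℕ) (p : ℕ) : List Bool :=
  (if cnt π p = 1 then [true] else []) ++ (if cnt π p = m + 1 - i then [false] else [])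

def truePos (w : List Bool) : List ℕ :=
  (List.range w.length).filter (fun p => w.getD p false = true)

lemma alphaI_eq (m i : ℕ) (π : List ℕ) :
    alphaI m i π = (List.range π.length).flatMap (blk m i π) := rfl

lemma kthTrueIdx_eq (w : List Bool) (k : ℕ) :
    kthTrueIdx w k = (truePos w).getD (k - 1) 0 := rfl

lemma count_take_succ (l : List ℕ) (v p : ℕ) :
    (l.take (p + 1)).count v = (l.take p).count v + (if l[p]? = some v then 1 else 0) := by
  rw [List.take_succ, List.count_append]
  congr 1
  rcases h : l[p]? with _ | a
  · simp
  · simp only [Option.toList]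
    by_cases hv : a = v
    · simp [hv]
    · rw [if_neg (by simp [hv])]
      simp [List.count_singleton, hv]

lemma count_take_mono (l : List ℕ) (v : ℕ) {a b : ℕ} (h : a ≤ b) :
    (l.take a).count v ≤ (l.take b).count v := by
  have : l.take a = (l.take b).take a := by rw [List.take_take, Nat.min_eq_left h]
  rw [this]
  exact (List.take_sublist _ _).count_le v

lemma exists_occ (π : List ℕ) (v j : ℕ) (h1 : 1 ≤ j) (h2 : j ≤ π.count v) :
    ∃ p, p < π.length ∧ π.getD p 0 = v ∧ cnt π p = j := by
  have hex : ∃ q, j ≤ (π.take (q + 1)).count v := by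
    refine ⟨π.length, ?_⟩
    rw [List.take_of_length_le (by omega)]
    exact h2
  classical
  set q := Nat.find hex with hq
  have hfind : j ≤ (π.take (q + 1)).count v := Nat.find_spec hex
  have hlt : (π.take q).count v < j := by
    rcases Nat.eq_zero_or_pos q with h0 | h0
    · simp [h0]; omega
    · have := Nat.find_min hex (m := q - 1) (by omega)
      have hq1 : q - 1 + 1 = q := by omega
      rw [hq1] at this; omega
  have hstep := count_take_succ π v q
  have hsome : π[q]? = some v ∧ (π.take (q + 1)).count v = j := by
    by_cases hs : π[q]? = some v
    · refine ⟨hs, ?_⟩; rw [hstep, if_pos hs] at hfind ⊢; omega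
    · rw [hstep, if_neg hs] at hfind; omega
  have hqlen : q < π.length := by
    by_contra hc
    rw [List.getElem?_eq_none (by omega)] at hsome
    exact (by simp at hsome)
  have hgd : π.getD q 0 = v := by
    rw [List.getD_eq_getElem?_getD, hsome.1]; rfl
  exact ⟨q, hqlen, hgd, by rw [cnt, hgd]; exact hsome.2⟩

lemma getD_eq_some (π : List ℕ) (p : ℕ) (hp : p < π.length) : π[p]? = some (π.getD p 0) := by
  rw [List.getD_eq_getElem?_getD, List.getElem?_eq_getElem hp]
  rfl

lemma cnt_strict_mono (π : List ℕ) {p p' : ℕ} (hlt : p < p') (hp' : p' < π.length)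
    (hv : π.getD p 0 = π.getD p' 0) : cnt π p < cnt π p' := by
  have h1 : cnt π p' = (π.take p').count (π.getD p' 0) + 1 := by
    rw [cnt, count_take_succ, if_pos (getD_eq_some π p' hp')]
  have h2 : (π.take (p + 1)).count (π.getD p' 0) ≤ (π.take p').count (π.getD p' 0) :=
    count_take_mono π _ (by omega)
  rw [cnt, hv]
  omega

lemma uniq (π : List ℕ) {p p' : ℕ} (hp : p < π.length) (hp' : p' < π.length)
    (hv : π.getD p 0 = π.getD p' 0) (hc : cnt π p = cnt π p') : p = p' := by
  rcases lt_trichotomy p p' with h | h | h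
  · exact absurd hc (by have := cnt_strict_mono π h hp' hv; omega)
  · exact h
  · exact absurd hc (by have := cnt_strict_mono π h hp hv.symm; omega)

lemma cnt_pos (π : List ℕ) {p : ℕ} (hp : p < π.length) : 1 ≤ cnt π p := by
  rw [cnt, count_take_succ, if_pos (getD_eq_some π p hp)]
  omega

lemma cnt_zero (π : List ℕ) (hval : ∀ v ∈ π, 1 ≤ v) {p : ℕ} (hp : π.length ≤ p) :
    cnt π p = 0 := by
  rw [cnt, List.getD_eq_default _ _ hp]
  have h0 : (0 : ℕ) ∉ π := fun h => by have := hval 0 h; omega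
  have : π.count 0 = 0 := List.count_eq_zero.mpr h0
  have := (List.take_sublist (p + 1) π).count_le 0
  omega

lemma exists_prev (π : List ℕ) {p j j' : ℕ} (hp : p < π.length) (hcp : cnt π p = j)
    (h1 : 1 ≤ j') (h2 : j' ≤ j) :
    ∃ q, q ≤ p ∧ π.getD q 0 = π.getD p 0 ∧ cnt π q = j' ∧ (j' < j → q < p) := by
  obtain ⟨q, hq1, hq2, hq3⟩ := exists_occ (π.take (p + 1)) (π.getD p 0) j' h1
    (by rw [← cnt]; omega)
  rw [List.length_take] at hq1
  have hqp : q ≤ p := by omega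
  have hgd : (π.take (p + 1)).getD q 0 = π.getD q 0 := by
    rw [List.getD_eq_getElem?_getD, List.getD_eq_getElem?_getD, List.getElem?_take,
      if_pos (by omega)]
  have hvq : π.getD q 0 = π.getD p 0 := by rw [← hgd]; exact hq2
  have hcq : cnt π q = j' := by
    simp only [cnt] at hq3 ⊢
    rw [hgd, hvq] at hq3
    rw [List.take_take, Nat.min_eq_left (by omega)] at hq3
    rw [hvq]
    exact hq3
  refine ⟨q, hqp, hvq, hcq, fun hlt => ?_⟩
  rcases Nat.lt_or_ge q p with h | h
  · exact h
  · have : q = p := by omega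
    subst this
    omega

lemma card_le_aux (π : List ℕ) (j j' P' P : ℕ) (h1 : 1 ≤ j') (h2 : j' ≤ j)
    (hsub : ∀ p ∈ (Finset.range P').filter (fun p => cnt π p = j), p < π.length)
    (hbound : ∀ p ∈ (Finset.range P').filter (fun p => cnt π p = j),
      ∀ q, q ≤ p → (j' < j → q < p) → q < P) :
    ((Finset.range P').filter (fun p => cnt π p = j)).card ≤
      ((Finset.range P).filter (fun p => cnt π p = j')).card := by
  classical
  set f : ℕ → ℕ := fun p => sInf {q | q ≤ p ∧ π.getD q 0 = π.getD p 0 ∧ cnt π q = j' ∧ (j' < j → q < p)}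
  have hmem : ∀ p ∈ (Finset.range P').filter (fun p => cnt π p = j),
      f p ≤ p ∧ π.getD (f p) 0 = π.getD p 0 ∧ cnt π (f p) = j' ∧ (j' < j → f p < p) := by
    intro p hp
    have hplen := hsub p hp
    have hcp : cnt π p = j := (Finset.mem_filter.mp hp).2
    obtain ⟨q, hq⟩ := exists_prev π hplen hcp h1 h2
    have : ({q | q ≤ p ∧ π.getD q 0 = π.getD p 0 ∧ cnt π q = j' ∧ (j' < j → q < p)} : Set ℕ).Nonempty := ⟨q, hq⟩
    exact Nat.sInf_mem this
  apply Finset.card_le_card_of_injOn f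
  · intro p hp
    obtain ⟨ha, _, hc, hd⟩ := hmem p hp
    refine Finset.mem_filter.mpr ⟨Finset.mem_range.mpr ?_, hc⟩
    exact hbound p hp (f p) ha hd
  · intro p hp p' hp' heq
    obtain ⟨_, hv, hc, _⟩ := hmem p hp
    obtain ⟨_, hv', hc', _⟩ := hmem p' hp'
    rw [heq] at hv
    exact uniq π (hsub p hp) (hsub p' hp') (hv.symm.trans hv')
      ((Finset.mem_filter.mp hp).2.trans (Finset.mem_filter.mp hp').2.symm)

lemma card_le (π : List ℕ) (j j' P : ℕ) (h1 : 1 ≤ j') (h2 : j' ≤ j) (hP : P ≤ π.length) :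
    ((Finset.range P).filter (fun p => cnt π p = j)).card ≤
      ((Finset.range P).filter (fun p => cnt π p = j')).card := by
  apply card_le_aux π j j' P P h1 h2
  · intro p hp
    have := Finset.mem_range.mp (Finset.mem_filter.mp hp).1
    omega
  · intro p hp q hq _
    have := Finset.mem_range.mp (Finset.mem_filter.mp hp).1
    omega

lemma card_lt (π : List ℕ) (j j' P : ℕ) (h1 : 1 ≤ j') (h2 : j' < j) (hP : P < π.length) :
    ((Finset.range (P + 1)).filter (fun p => cnt π p = j)).card ≤
      ((Finset.range P).filter (fun p => cnt π p = j')).card := by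
  apply card_le_aux π j j' (P + 1) P h1 (by omega)
  · intro p hp
    have := Finset.mem_range.mp (Finset.mem_filter.mp hp).1
    omega
  · intro p hp q hq hstrict
    have := Finset.mem_range.mp (Finset.mem_filter.mp hp).1
    have := hstrict h2
    omega

lemma card_eq_n {m n : ℕ} (π : List ℕ)
    (hcount : ∀ v, 1 ≤ v → v ≤ n → π.count v = m)
    (hval : ∀ v, v ∈ π → 1 ≤ v ∧ v ≤ n)
    (j : ℕ) (h1 : 1 ≤ j) (h2 : j ≤ m) :
    ((Finset.range π.length).filter (fun p => cnt π p = j)).card = n := by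
  classical
  rw [show n = (Finset.Icc 1 n).card by rw [Nat.card_Icc]; omega]
  apply Finset.card_bij (fun p _ => π.getD p 0)
  · intro p hp
    have hplen : p < π.length := Finset.mem_range.mp (Finset.mem_filter.mp hp).1
    have hmem : π.getD p 0 ∈ π := by
      rw [List.getD_eq_getElem?_getD, List.getElem?_eq_getElem hplen]
      exact List.getElem_mem hplen
    have := hval _ hmem
    exact Finset.mem_Icc.mpr this
  · intro p hp p' hp' heq
    exact uniq π (Finset.mem_range.mp (Finset.mem_filter.mp hp).1)
      (Finset.mem_range.mp (Finset.mem_filter.mp hp').1) heq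
      ((Finset.mem_filter.mp hp).2.trans (Finset.mem_filter.mp hp').2.symm)
  · intro v hv
    obtain ⟨h1v, h2v⟩ := Finset.mem_Icc.mp hv
    obtain ⟨p, hplen, hgd, hcnt⟩ := exists_occ π v j h1 (by rw [hcount v h1v h2v]; omega)
    exact ⟨p, Finset.mem_filter.mpr ⟨Finset.mem_range.mpr hplen, hcnt⟩, hgd⟩

lemma count_true_blk (m i : ℕ) (π : List ℕ) (p : ℕ) :
    (blk m i π p).count true = if cnt π p = 1 then 1 else 0 := by
  rw [blk]
  split_ifs with h1 h2 h2 <;> simp [List.count_append]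

lemma count_false_blk (m i : ℕ) (π : List ℕ) (p : ℕ) :
    (blk m i π p).count false = if cnt π p = m + 1 - i then 1 else 0 := by
  rw [blk]
  split_ifs with h1 h2 h2 <;> simp [List.count_append]

lemma count_flat (m i : ℕ) (π : List ℕ) (b : Bool) (P : ℕ) :
    ((List.range P).flatMap (blk m i π)).count b =
      ((Finset.range P).filter (fun p => cnt π p = if b then 1 else m + 1 - i)).card := by
  induction P with
  | zero => simp
  | succ P ih =>
    rw [List.range_succ, List.flatMap_append, List.count_append, ih, Finset.range_add_one,
      Finset.filter_insert]
    have hbase : ([P] : List ℕ).flatMap (blk m i π) = blk m i π P := by simp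
    rw [hbase]
    have hcnt : (blk m i π P).count b = if cnt π P = (if b then 1 else m + 1 - i) then 1 else 0 := by
      cases b
      · exact count_false_blk m i π P
      · exact count_true_blk m i π P
    rw [hcnt]
    by_cases h : cnt π P = (if b then 1 else m + 1 - i)
    · rw [if_pos h, if_pos h, Finset.card_insert_of_notMem (by simp)]
    · rw [if_neg h, if_neg h]
      omega

lemma count_flat_true (m i : ℕ) (π : List ℕ) (P : ℕ) :
    ((List.range P).flatMap (blk m i π)).count true =
      ((Finset.range P).filter (fun p => cnt π p = 1)).card := by
  simpa using count_flat m i π true P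

lemma count_flat_false (m i : ℕ) (π : List ℕ) (P : ℕ) :
    ((List.range P).flatMap (blk m i π)).count false =
      ((Finset.range P).filter (fun p => cnt π p = m + 1 - i)).card := by
  simpa using count_flat m i π false P

lemma truePos_append (u v : List Bool) :
    truePos (u ++ v) = truePos u ++ (truePos v).map (u.length + ·) := by
  simp only [truePos, List.length_append, List.range_add, List.filter_append, List.filter_map]
  congr 1
  · apply List.filter_congr
    intro p hp
    have hp' : p < u.length := List.mem_range.mp hp
    simp only [List.getD_eq_getElem?_getD, List.getElem?_append_left hp']
  · rw [List.filter_congr (fun p hp => ?_)]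
    have hp' : p < v.length := List.mem_range.mp hp
    simp only [Function.comp_apply, List.getD_eq_getElem?_getD]
    rw [List.getElem?_append_right (by omega)]
    simp

lemma truePos_blk (m i : ℕ) (π : List ℕ) (p : ℕ) :
    truePos (blk m i π p) = if cnt π p = 1 then [0] else [] := by
  rw [blk]
  split_ifs with h1 h2 h2 <;> simp_all [truePos] <;> decide

lemma truePos_flat (m i : ℕ) (π : List ℕ) (P : ℕ) :
    truePos ((List.range P).flatMap (blk m i π)) =
      ((List.range P).filter (fun p => cnt π p = 1)).map
        (fun p => ((List.range p).flatMap (blk m i π)).length) := by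
  induction P with
  | zero => simp [truePos]
  | succ P ih =>
    rw [List.range_succ, List.flatMap_append, truePos_append, ih, List.filter_append,
      List.map_append]
    congr 1
    have hbase : ([P] : List ℕ).flatMap (blk m i π) = blk m i π P := by simp
    rw [hbase, truePos_blk]
    split_ifs with h <;> simp [h]

lemma take_flatMap {α β : Type} (f : α → List β) :
    ∀ (l : List α) (t : ℕ),
      (∃ l₁ a l₂ s, l = l₁ ++ a :: l₂ ∧
        (l.flatMap f).take t = l₁.flatMap f ++ (f a).take s) ∨
      (l.flatMap f).take t = l.flatMap f := by
  intro l
  induction l with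
  | nil => intro t; right; simp
  | cons a l ih =>
    intro t
    by_cases ht : t ≤ (f a).length
    · left
      refine ⟨[], a, l, t, by simp, ?_⟩
      rw [List.flatMap_cons, List.take_append]
      have h0 : t - (f a).length = 0 := by omega
      rw [h0]
      simp
    · rcases ih (t - (f a).length) with ⟨l₁, a', l₂, s, hdec, htake⟩ | hfull
      · left
        refine ⟨a :: l₁, a', l₂, s, by simp [hdec], ?_⟩
        rw [List.flatMap_cons, List.take_append,
          List.take_of_length_le (l := f a) (by omega), htake]
        simp
      · right
        rw [List.flatMap_cons, List.take_append,
          List.take_of_length_le (l := f a) (by omega), hfull]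

lemma range_decomp {L : ℕ} {l₁ l₂ : List ℕ} {a : ℕ}
    (h : List.range L = l₁ ++ a :: l₂) : l₁ = List.range a ∧ a < L := by
  have hlen : L = l₁.length + (a :: l₂).length := by
    have := congrArg List.length h
    simpa using this
  have haL : l₁.length < L := by simp at hlen; omega
  have ha : a = l₁.length := by
    have := congrArg (fun l => l.getD l₁.length 0) h
    simp only [List.getD_eq_getElem?_getD] at this
    rw [List.getElem?_range haL, List.getElem?_append_right (le_refl _)] at this
    simpa using this.symm
  constructor
  · have h2 := congrArg (List.take l₁.length) h
    rw [List.take_left, List.take_range, Nat.min_eq_left haL.le] at h2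
    rw [ha]
    exact h2.symm
  · omega

/-- main balance lemma: every prefix of `alphaI m i π` has at least as many
`true`s as `false`s. -/
lemma prefix_balance {m n : ℕ} (π : List ℕ)
    (hval : ∀ v, v ∈ π → 1 ≤ v ∧ v ≤ n)
    (i : ℕ) (hi1 : 1 ≤ i) (hi2 : i ≤ m) (t : ℕ) :
    ((alphaI m i π).take t).count false ≤ ((alphaI m i π).take t).count true := by
  have hj1 : 1 ≤ m + 1 - i := by omega
  rw [alphaI_eq]
  rcases take_flatMap (blk m i π) (List.range π.length) t with
    ⟨l₁, a, l₂, s, hdec, htake⟩ | hfull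
  · obtain ⟨hl₁, haL⟩ := range_decomp hdec
    subst hl₁
    rw [htake, List.count_append, List.count_append, count_flat_true, count_flat_false]
    have hBA : ((Finset.range a).filter (fun p => cnt π p = m + 1 - i)).card ≤
        ((Finset.range a).filter (fun p => cnt π p = 1)).card :=
      card_le π (m + 1 - i) 1 a (le_refl 1) hj1 (by omega)
    by_cases h1 : cnt π a = 1
    · -- block starts with true: any prefix of block has count false ≤ count true
      have hblk : (blk m i π a).count false ≤ 1 ∧
          ∀ s, ((blk m i π a).take s).count false ≤ ((blk m i π a).take s).count true := by
        rw [blk, if_pos h1]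
        by_cases h2 : cnt π a = m + 1 - i
        · rw [if_pos h2]
          refine ⟨by decide, fun s => ?_⟩
          match s with
          | 0 => decide
          | 1 => decide
          | (k+2) => rw [List.take_of_length_le (by simp)]; decide
        · rw [if_neg h2]
          refine ⟨by decide, fun s => ?_⟩
          match s with
          | 0 => decide
          | (k+1) => rw [List.take_of_length_le (by simp)]; decide
      have := hblk.2 s
      omega
    · by_cases h2 : cnt π a = m + 1 - i
      · -- pure false block
        have hblk : blk m i π a = [false] := by rw [blk, if_neg h1, if_pos h2]; rfl
        rw [hblk]
        match s with
        | 0 => simpa using hBA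
        | (k+1) =>
          rw [List.take_of_length_le (by simp)]
          simp only [List.count_singleton]
          have haLlen : a < π.length := haL
          have hstrict : 1 < m + 1 - i := by
            have := cnt_pos π haLlen
            omega
          have hkey := card_lt π (m + 1 - i) 1 a (le_refl 1) hstrict haLlen
          have hsucc : ((Finset.range (a + 1)).filter (fun p => cnt π p = m + 1 - i)).card =
              ((Finset.range a).filter (fun p => cnt π p = m + 1 - i)).card + 1 := by
            rw [Finset.range_add_one, Finset.filter_insert, if_pos h2,
              Finset.card_insert_of_notMem (by simp)]
          simp
          omega
      · have hblk : blk m i π a = [] := by rw [blk, if_neg h1, if_neg h2]; rfl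
        rw [hblk]
        simpa using hBA
  · rw [hfull, count_flat_true, count_flat_false]
    exact card_le π (m + 1 - i) 1 π.length (le_refl 1) hj1 (le_refl _)

end SPaux

open SPaux in
theorem alphaI_dyck_and_young_chain (m n : ℕ) (hm : 0 < m) (hn : 0 < n)
    (π : List ℕ) (hπ : IsStirling m n π) :
    (∀ i, 1 ≤ i → i ≤ m → IsDyckWord n (alphaI m i π)) ∧
    (∀ i k, 1 ≤ i → i ≤ m - 1 → 1 ≤ k → k ≤ n →
      stepVal (alphaI m i π) k ≤ stepVal (alphaI m (i + 1) π) k) := by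
  obtain ⟨hlen, hcount, hval, _⟩ := hπ
  constructor
  · intro i hi1 hi2
    refine ⟨?_, ?_, fun t => prefix_balance π hval i hi1 hi2 t⟩
    · rw [alphaI_eq, count_flat_true]
      exact card_eq_n π hcount hval 1 (le_refl 1) hm
    · rw [alphaI_eq, count_flat_false]
      exact card_eq_n π hcount hval (m + 1 - i) (by omega) (by omega)
  · intro i k hi1 hi2 hk1 hk2
    have hm2 : 2 ≤ m := by omega
    -- the list of first-occurrence positions
    set FOL : List ℕ := (List.range π.length).filter (fun p => cnt π p = 1) with hFOL
    have hFOLlen : FOL.length = n := by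
      have hbridge : FOL.length =
          ((Finset.range π.length).filter (fun p => cnt π p = 1)).card := rfl
      rw [hbridge]
      exact card_eq_n π hcount hval 1 (le_refl 1) hm
    have hkidx : k - 1 < FOL.length := by omega
    set p : ℕ := FOL[k - 1] with hp
    have hpmem : p ∈ FOL := List.getElem_mem hkidx
    have hpL : p < π.length := by
      have := List.mem_filter.mp hpmem
      exact List.mem_range.mp this.1
    have hcp : cnt π p = 1 := by
      have := List.mem_filter.mp hpmem
      simpa using this.2
    -- per-index: kthTrueIdx and stepVal computation
    have key : ∀ i', 1 ≤ i' → i' ≤ m →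
        stepVal (alphaI m i' π) k =
          ((Finset.range p).filter (fun q => cnt π q = m + 1 - i')).card := by
      intro i' hi'1 hi'2
      have hkth : kthTrueIdx (alphaI m i' π) k =
          ((List.range p).flatMap (blk m i' π)).length := by
        rw [kthTrueIdx_eq, alphaI_eq, truePos_flat, ← hFOL]
        rw [List.getD_eq_getElem?_getD, List.getElem?_map, List.getElem?_eq_getElem hkidx]
        rfl
      rw [stepVal, hkth, alphaI_eq]
      have hsplit : List.range π.length =
          List.range p ++ (List.range (π.length - p)).map (p + ·) := by
        rw [← List.range_add]
        congr 1
        omega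
      rw [hsplit, List.flatMap_append, List.take_left']
      · rw [count_flat_false]
      · rfl
    rw [key i hi1 (by omega), key (i + 1) (by omega) (by omega)]
    have : m + 1 - (i + 1) ≤ m + 1 - i := by omega
    exact card_le π (m + 1 - i) (m + 1 - (i + 1)) p (by omega) this (by omega)
end
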